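/- arXiv:2307.01481 — 2 statements merged into one kernel-verified Lean document; each statement's English description precedes it below -/
import Mathlib

section
/- Let E be a quantum operation on a d-dimensional Hilbert space with operator-sum representation E(ρ) = Σᵢ Eᵢ ρ Eᵢ†, where Σᵢ Eᵢ†Eᵢ = I. If for all indices i, j the matrix Eᵢ†Eⱼ is a scalar multiple of the identity, then E is a unitary transform: there exists a unitary U and complex numbers kᵢ with Σᵢ|kᵢ|² = 1 such that Eᵢ = kᵢU for all i. -/
/-!
Write `(E i)ᴴ * E j = c i j • 1`. Completeness forces some `c i₀ i₀ ≠ 0`, and since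
`(E i₀)ᴴ * E i₀` is positive semidefinite this scalar is a positive real, so a rescaling `U` of
`E i₀` is unitary. Then `E i = U * (Uᴴ * E i)` with `Uᴴ * E i` a scalar, and completeness
reads `(∑ i, ‖k i‖ ^ 2) • 1 = 1`.
-/

open Matrix
open scoped ComplexOrder

namespace Matrix

variable {n 𝕜 : Type*} [Fintype n] [DecidableEq n] [RCLike 𝕜]

theorem smul_one_injective [Nonempty n] :
    Function.Injective fun c : 𝕜 => c • (1 : Matrix n n 𝕜) :=
  smul_left_injective 𝕜 one_ne_zero

theorem nonneg_of_conjTranspose_mul_self_eq_smul_one [Nonempty n] {A : Matrix n n 𝕜} {c : 𝕜}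
    (hA : Aᴴ * A = c • 1) : 0 ≤ c := by
  have h := (posSemidef_conjTranspose_mul_self A).diag_nonneg (i := Classical.arbitrary n)
  simpa [hA] using h

theorem exists_smul_mem_unitaryGroup {A : Matrix n n 𝕜} {c : 𝕜} (hc : 0 < c)
    (hA : Aᴴ * A = c • 1) : ∃ a : 𝕜, a • A ∈ unitaryGroup n 𝕜 := by
  obtain ⟨r, hr, rfl⟩ := RCLike.pos_iff_exists_ofReal.mp hc
  refine ⟨((√r)⁻¹ : ℝ), ?_⟩
  rw [mem_unitaryGroup_iff', star_eq_conjTranspose, conjTranspose_smul, smul_mul_smul_comm, hA,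
    smul_smul, RCLike.star_def, RCLike.conj_ofReal]
  have : (√r)⁻¹ * (√r)⁻¹ * r = 1 := by
    rw [← mul_inv, Real.mul_self_sqrt hr.le, inv_mul_cancel₀ hr.ne']
  rw [← RCLike.ofReal_mul, ← RCLike.ofReal_mul, this, RCLike.ofReal_one, one_smul]

theorem eq_smul_of_star_mul_eq_smul_one {U B : Matrix n n 𝕜} (hU : U ∈ unitaryGroup n 𝕜) {k : 𝕜}
    (hB : star U * B = k • 1) : B = k • U := by
  rw [← one_mul B, ← mem_unitaryGroup_iff.mp hU, mul_assoc, hB, mul_smul_comm, mul_one]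

theorem conjTranspose_smul_mul_smul_of_mem_unitaryGroup {U : Matrix n n 𝕜}
    (hU : U ∈ unitaryGroup n 𝕜) (k : 𝕜) :
    (k • U)ᴴ * (k • U) = ((‖k‖ ^ 2 : ℝ) : 𝕜) • 1 := by
  rw [conjTranspose_smul, smul_mul_smul_comm, ← star_eq_conjTranspose,
    mem_unitaryGroup_iff'.mp hU, RCLike.star_def, RCLike.conj_mul]
  norm_cast

end Matrix

/-- If all Eᵢ†Eⱼ are scalar multiples of the identity and Σᵢ Eᵢ†Eᵢ = I, then the quantum
operation with Kraus operators {Eᵢ} is a unitary transform: Eᵢ = kᵢ U with Σᵢ|kᵢ|² = 1. -/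
theorem kraus_scalar_implies_unitary
    {d N : ℕ} (hd : 0 < d) (E : Fin N → Matrix (Fin d) (Fin d) ℂ)
    (hcomp : ∑ i, (E i)ᴴ * E i = 1)
    (hscal : ∀ i j, ∃ c : ℂ, (E i)ᴴ * E j = c • (1 : Matrix (Fin d) (Fin d) ℂ)) :
    ∃ (U : Matrix (Fin d) (Fin d) ℂ) (k : Fin N → ℂ),
      U ∈ Matrix.unitaryGroup (Fin d) ℂ ∧ (∑ i, ‖k i‖ ^ 2 = 1) ∧ ∀ i, E i = k i • U := by
  have : NeZero d := ⟨hd.ne'⟩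
  choose c hc using hscal
  obtain ⟨i₀, -, hi₀⟩ := Finset.exists_ne_zero_of_sum_ne_zero (hcomp ▸ one_ne_zero)
  have hc₀ : c i₀ i₀ ≠ 0 := by rintro h; exact hi₀ (by rw [hc, h, zero_smul])
  obtain ⟨a, hU⟩ := exists_smul_mem_unitaryGroup
    ((nonneg_of_conjTranspose_mul_self_eq_smul_one (hc i₀ i₀)).lt_of_ne' hc₀) (hc i₀ i₀)
  have hE : ∀ i, E i = (star a * c i₀ i) • (a • E i₀) := fun i =>
    eq_smul_of_star_mul_eq_smul_one hU <| by
      rw [star_smul, star_eq_conjTranspose, smul_mul_assoc, hc, smul_smul]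
  refine ⟨_, _, hU, ?_, hE⟩
  have hnorm : ((∑ i, ‖star a * c i₀ i‖ ^ 2 : ℝ) : ℂ) • (1 : Matrix (Fin d) (Fin d) ℂ) =
      (1 : ℂ) • 1 := by
    rw [one_smul, Complex.ofReal_sum, Finset.sum_smul]
    refine (Finset.sum_congr rfl fun i _ => ?_).trans hcomp
    rw [hE i, conjTranspose_smul_mul_smul_of_mem_unitaryGroup hU]
    rfl -- `RCLike.ofReal` unfolds to `Complex.ofReal`
  exact_mod_cast smul_one_injective hnorm
end

section
/- Let E be a trace-preserving quantum operation on a d-dimensional Hilbert space with orthonormal basis {|1⟩,...,|d⟩}, and define |±_{mn}⟩ = (|m⟩ ± |n⟩)/√2 for m ≠ n. Then E is a unitary transform if and only if (1) tr[E(|m⟩⟨m|)·E(|n⟩⟨n|)] = 0 for all m ≠ n, and (2) tr[E(|+_{mn}⟩⟨+_{mn}|)·E(|−_{mn}⟩⟨−_{mn}|)] = 0 for d−1 pairs (m,n) with m ≠ n forming the edges of a connected graph on the vertex set {1,...,d}. -/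
/-!
The trace `tr[E(|x⟩⟨x|) E(|y⟩⟨y|)]` equals `∑ᵢⱼ |⟨Kᵢ x, Kⱼ y⟩|²`, so it vanishes iff
`⟨x, Kᵢ† Kⱼ y⟩ = 0` for all `i, j`. For the basis vectors this says that every `Kᵢ† Kⱼ` is
diagonal; for `|±ₘₙ⟩` it then says that the diagonal entries at `m` and `n` agree, so along the
connected graph `Kᵢ† Kⱼ = gᵢⱼ • 1`. Some `gⱼⱼ` is nonzero because `∑ᵢ gᵢᵢ = 1`; then
`U = Kⱼ / √gⱼⱼ` is unitary and `Kᵢ = U (U† Kᵢ)` is a multiple of `U` for every `i`.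
-/

open Matrix

/-- The quantum operation determined by Kraus operators `K`: ρ ↦ Σᵢ Kᵢ ρ Kᵢ†. -/
noncomputable def krausMap {d N : ℕ} (K : Fin N → Matrix (Fin d) (Fin d) ℂ)
    (ρ : Matrix (Fin d) (Fin d) ℂ) : Matrix (Fin d) (Fin d) ℂ :=
  ∑ i, K i * ρ * (K i)ᴴ

/-- The unit vector |+_{mn}⟩ = (|m⟩ + |n⟩)/√2. -/
noncomputable def plusVec {d : ℕ} (m n : Fin d) : Fin d → ℂ :=
  fun i => ((if i = m then 1 else 0) + (if i = n then 1 else 0)) / Real.sqrt 2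

/-- The unit vector |−_{mn}⟩ = (|m⟩ − |n⟩)/√2. -/
noncomputable def minusVec {d : ℕ} (m n : Fin d) : Fin d → ℂ :=
  fun i => ((if i = m then 1 else 0) - (if i = n then 1 else 0)) / Real.sqrt 2

open scoped ComplexOrder

theorem SimpleGraph.Reachable.apply_eq_of_adj {V α : Type*} {G : SimpleGraph V} {f : V → α}
    (hf : ∀ u v, G.Adj u v → f u = f v) {u v : V} (h : G.Reachable u v) : f u = f v := by
  obtain ⟨p⟩ := h
  induction p with
  | nil => rfl
  | cons hadj _ ih => exact (hf _ _ hadj).trans ih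

namespace Matrix

variable {l n R : Type*}

theorem exists_eq_smul_one_of_connected [DecidableEq n] [Semiring R] {G : SimpleGraph n}
    (hG : G.Connected) {A : Matrix n n R} (hoff : ∀ m n, m ≠ n → A m n = 0)
    (hdiag : ∀ m n, G.Adj m n → A m m = A n n) : ∃ c : R, A = c • 1 := by
  obtain ⟨m₀⟩ := hG.nonempty
  refine ⟨A m₀ m₀, ext fun m n => ?_⟩
  by_cases hmn : m = n
  · subst hmn
    simpa using (hG.preconnected m m₀).apply_eq_of_adj (f := fun k => A k k) hdiag
  · simp [hoff m n hmn, hmn]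

theorem star_single_one_dotProduct_mulVec_single_one [Fintype n] [DecidableEq n] [Semiring R]
    [StarRing R] (A : Matrix n n R) (m k : n) :
    star (Pi.single m 1 : n → R) ⬝ᵥ (A *ᵥ Pi.single k 1) = A m k := by
  rw [← Pi.single_star, star_one, single_one_dotProduct, mulVec_single_one, col_apply]

theorem single_one_eq_vecMulVec_star [DecidableEq n] [Semiring R] [StarRing R] (m : n) :
    single m m (1 : R) = vecMulVec (Pi.single m 1) (star (Pi.single m 1)) := by
  rw [← Pi.single_star, star_one, single_eq_single_vecMulVec_single]

section CommSemiring

variable [Fintype n] [CommSemiring R] [StarRing R]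

theorem mul_vecMulVec_star_mul_conjTranspose (M : Matrix l n R) (x : n → R) :
    M * vecMulVec x (star x) * Mᴴ = vecMulVec (M *ᵥ x) (star (M *ᵥ x)) := by
  rw [mul_vecMulVec, vecMulVec_mul, star_mulVec]

theorem trace_vecMulVec_star_mul_vecMulVec_star (x y : n → R) :
    trace (vecMulVec x (star x) * vecMulVec y (star y)) = star (star x ⬝ᵥ y) * (star x ⬝ᵥ y) := by
  rw [vecMulVec_mul_vecMulVec, trace_vecMulVec, dotProduct_smul, smul_eq_mul, mul_comm,
    dotProduct_comm, star_dotProduct]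

theorem star_mulVec_dotProduct_mulVec [Fintype l] (A B : Matrix l n R) (x y : n → R) :
    star (A *ᵥ x) ⬝ᵥ (B *ᵥ y) = star x ⬝ᵥ ((Aᴴ * B) *ᵥ y) := by
  rw [star_mulVec, ← dotProduct_mulVec, mulVec_mulVec]

end CommSemiring

section Complex

variable {ι : Type*} [Fintype ι] [Fintype n] [DecidableEq n]

theorem exists_unitary_smul_eq_of_conjTranspose_mul_eq_smul_one [Nonempty n]
    {K : ι → Matrix n n ℂ} {g : ι → ι → ℂ} (hg : ∀ i j, (K i)ᴴ * K j = g i j • 1)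
    (hcomp : ∑ i, (K i)ᴴ * K i = 1) :
    ∃ U ∈ unitaryGroup n ℂ, ∃ α : ι → ℂ, ∀ i, K i = α i • U := by
  obtain ⟨m₀⟩ := ‹Nonempty n›
  have htrace : ∑ i, g i i = 1 := by
    simpa [hg, sum_apply] using congrFun (congrFun hcomp m₀) m₀
  obtain ⟨j, -, hj⟩ := Finset.exists_ne_zero_of_sum_ne_zero (htrace ▸ one_ne_zero)
  have hpos : 0 ≤ g j j := by
    simpa [hg] using (posSemidef_conjTranspose_mul_self (K j)).diag_nonneg (i := m₀)
  set r : ℂ := ((√‖g j j‖ : ℝ) : ℂ)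
  have hr : star r * r = g j j := by
    rw [Complex.star_def, Complex.conj_ofReal, ← Complex.ofReal_mul,
      Real.mul_self_sqrt (norm_nonneg _), ← Complex.eq_coe_norm_of_nonneg hpos]
  set U := r⁻¹ • K j
  have hUU : Uᴴ * U = 1 := by
    rw [conjTranspose_smul, smul_mul_smul_comm, hg, smul_smul, star_inv₀, ← mul_inv, hr,
      inv_mul_cancel₀ hj, one_smul]
  refine ⟨U, mem_unitaryGroup_iff'.2 hUU, fun i => (star r)⁻¹ * g j i, fun i => ?_⟩
  have hUK : Uᴴ * K i = ((star r)⁻¹ * g j i) • 1 := by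
    rw [conjTranspose_smul, smul_mul, hg, smul_smul, star_inv₀]
  calc K i = U * (Uᴴ * K i) := by rw [← Matrix.mul_assoc, mul_eq_one_comm.1 hUU, Matrix.one_mul]
    _ = ((star r)⁻¹ * g j i) • U := by rw [hUK, Matrix.mul_smul, Matrix.mul_one]

theorem sum_mul_mul_conjTranspose_eq_of_eq_smul {K : ι → Matrix n n ℂ} {U : Matrix n n ℂ}
    (hU : U ∈ unitaryGroup n ℂ) {α : ι → ℂ} (hK : ∀ i, K i = α i • U)
    (hcomp : ∑ i, (K i)ᴴ * K i = 1) (ρ : Matrix n n ℂ) :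
    ∑ i, K i * ρ * (K i)ᴴ = U * ρ * Uᴴ := by
  have hUU : Uᴴ * U = 1 := mem_unitaryGroup_iff'.1 hU
  have hnorm : (∑ i, star (α i) * α i) • (1 : Matrix n n ℂ) = 1 := by
    simpa only [hK, conjTranspose_smul, smul_mul_smul_comm, hUU,
      ← Finset.sum_smul] using hcomp
  calc ∑ i, K i * ρ * (K i)ᴴ = (∑ i, star (α i) * α i) • (U * ρ * Uᴴ) := by
        simp only [hK, conjTranspose_smul, Finset.sum_smul, smul_mul, Matrix.mul_smul, smul_smul]
    _ = U * ρ * Uᴴ := by rw [← smul_one_mul, hnorm, Matrix.one_mul]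

end Complex

end Matrix

theorem trace_krausMap_mul_krausMap_eq_zero_iff {d N : ℕ}
    (K : Fin N → Matrix (Fin d) (Fin d) ℂ) (x y : Fin d → ℂ) :
    trace (krausMap K (vecMulVec x (star x)) * krausMap K (vecMulVec y (star y))) = 0 ↔
      ∀ i j, star x ⬝ᵥ (((K i)ᴴ * K j) *ᵥ y) = 0 := by
  simp only [krausMap, mul_vecMulVec_star_mul_conjTranspose, Finset.sum_mul_sum, trace_sum,
    trace_vecMulVec_star_mul_vecMulVec_star, star_mulVec_dotProduct_mulVec]
  rw [Fintype.sum_eq_zero_iff_of_nonneg fun i =>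
    Fintype.sum_nonneg fun j => star_mul_self_nonneg _]
  simp only [funext_iff, Pi.zero_apply, CStarRing.star_mul_self_eq_zero_iff,
    Fintype.sum_eq_zero_iff_of_nonneg fun j => star_mul_self_nonneg _]

theorem plusVec_eq {d : ℕ} (m n : Fin d) :
    plusVec m n = ((√2 : ℝ) : ℂ)⁻¹ • (Pi.single m 1 + Pi.single n 1) := by
  ext a
  simp [plusVec, Pi.single_apply, div_eq_inv_mul]

theorem minusVec_eq {d : ℕ} (m n : Fin d) :
    minusVec m n = ((√2 : ℝ) : ℂ)⁻¹ • (Pi.single m 1 - Pi.single n 1) := by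
  ext a
  simp [minusVec, Pi.single_apply, div_eq_inv_mul]

theorem star_plusVec_dotProduct_mulVec_minusVec {d : ℕ} (A : Matrix (Fin d) (Fin d) ℂ)
    (m n : Fin d) :
    star (plusVec m n) ⬝ᵥ (A *ᵥ minusVec m n) = (A m m - A m n + A n m - A n n) / 2 := by
  have hsqrt : star ((√2 : ℝ) : ℂ)⁻¹ * ((√2 : ℝ) : ℂ)⁻¹ = 1 / 2 := by
    rw [star_inv₀, Complex.star_def, Complex.conj_ofReal, ← mul_inv, ← Complex.ofReal_mul,
      Real.mul_self_sqrt zero_le_two, one_div, Complex.ofReal_ofNat]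
  rw [plusVec_eq, minusVec_eq, star_smul, mulVec_smul, smul_dotProduct, dotProduct_smul,
    smul_smul, smul_eq_mul, hsqrt, star_add, add_dotProduct, mulVec_sub, dotProduct_sub,
    dotProduct_sub]
  simp only [star_single_one_dotProduct_mulVec_single_one]
  ring

theorem unitary_iff_orthogonality_preserving_general
    {d N : ℕ} (K : Fin N → Matrix (Fin d) (Fin d) ℂ)
    (hcomp : ∑ i, (K i)ᴴ * K i = 1)
    (edges : Fin (d - 1) → Fin d × Fin d)
    (hconn : (SimpleGraph.fromRel (fun a b => ∃ e, edges e = (a, b))).Connected) :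
    (∃ U : Matrix (Fin d) (Fin d) ℂ, U ∈ Matrix.unitaryGroup (Fin d) ℂ ∧
        ∀ ρ : Matrix (Fin d) (Fin d) ℂ, krausMap K ρ = U * ρ * Uᴴ) ↔
    ((∀ m n : Fin d, m ≠ n →
        Matrix.trace (krausMap K (Matrix.single m m 1) *
          krausMap K (Matrix.single n n 1)) = 0) ∧
     (∀ e, Matrix.trace
        (krausMap K (vecMulVec (plusVec (edges e).1 (edges e).2)
            (star (plusVec (edges e).1 (edges e).2))) *
         krausMap K (vecMulVec (minusVec (edges e).1 (edges e).2)
            (star (minusVec (edges e).1 (edges e).2)))) = 0)) := by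
  simp only [single_one_eq_vecMulVec_star]
  constructor
  · rintro ⟨U, hU, hE⟩
    have hK : krausMap K = krausMap (fun _ : Fin 1 => U) :=
      funext fun ρ => by rw [hE]; simp [krausMap]
    have hUU : Uᴴ * U = 1 := mem_unitaryGroup_iff'.1 hU
    simp only [hK, trace_krausMap_mul_krausMap_eq_zero_iff, hUU,
      star_single_one_dotProduct_mulVec_single_one, star_plusVec_dotProduct_mulVec_minusVec]
    refine ⟨fun m n hmn _ _ => one_apply_ne hmn, fun e _ _ => ?_⟩
    simp only [one_apply, eq_comm (a := (edges e).2)]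
    ring
  · simp only [trace_krausMap_mul_krausMap_eq_zero_iff,
      star_single_one_dotProduct_mulVec_single_one, star_plusVec_dotProduct_mulVec_minusVec]
    rintro ⟨hoff, hedge⟩
    have hdiag : ∀ i j m n, m ≠ n → (∃ e, edges e = (m, n)) →
        ((K i)ᴴ * K j) m m = ((K i)ᴴ * K j) n n := by
      rintro i j m n hmn ⟨e, he⟩
      have h := hedge e i j
      rw [he] at h
      linear_combination 2 * h + hoff m n hmn i j - hoff n m hmn.symm i j
    have hscalar : ∀ i j, ∃ c : ℂ, (K i)ᴴ * K j = c • 1 := fun i j =>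
      exists_eq_smul_one_of_connected hconn (fun m n hmn => hoff m n hmn i j) fun m n hadj =>
        match (SimpleGraph.fromRel_adj _ m n).1 hadj with
        | ⟨hmn, .inl he⟩ => hdiag i j m n hmn he
        | ⟨hmn, .inr he⟩ => (hdiag i j n m hmn.symm he).symm
    choose g hg using hscalar
    have := hconn.nonempty
    obtain ⟨U, hU, α, hK⟩ := exists_unitary_smul_eq_of_conjTranspose_mul_eq_smul_one hg hcomp
    exact ⟨U, hU, sum_mul_mul_conjTranspose_eq_of_eq_smul hU hK hcomp⟩

/-- A trace-preserving quantum operation given in Kraus form is a unitary transform iff it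
sends the pairs of orthogonal states (|m⟩,|n⟩) (all m ≠ n) and (|+_{mn}⟩,|−_{mn}⟩) (for d−1
pairs forming the edges of a connected graph on {1,…,d}) to pairs of states with zero
Hilbert–Schmidt inner product. -/
theorem unitary_iff_orthogonality_preserving
    {d N : ℕ} (hd : 0 < d) (K : Fin N → Matrix (Fin d) (Fin d) ℂ)
    (hcomp : ∑ i, (K i)ᴴ * K i = 1)
    (edges : Fin (d - 1) → Fin d × Fin d)
    (hne : ∀ e, (edges e).1 ≠ (edges e).2)
    (hconn : (SimpleGraph.fromRel (fun a b => ∃ e, edges e = (a, b))).Connected) :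
    (∃ U : Matrix (Fin d) (Fin d) ℂ, U ∈ Matrix.unitaryGroup (Fin d) ℂ ∧
        ∀ ρ : Matrix (Fin d) (Fin d) ℂ, krausMap K ρ = U * ρ * Uᴴ) ↔
    ((∀ m n : Fin d, m ≠ n →
        Matrix.trace (krausMap K (Matrix.single m m 1) *
          krausMap K (Matrix.single n n 1)) = 0) ∧
     (∀ e, Matrix.trace
        (krausMap K (vecMulVec (plusVec (edges e).1 (edges e).2)
            (star (plusVec (edges e).1 (edges e).2))) *
         krausMap K (vecMulVec (minusVec (edges e).1 (edges e).2)
            (star (minusVec (edges e).1 (edges e).2)))) = 0)) :=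
  unitary_iff_orthogonality_preserving_general K hcomp edges hconn
end
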